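/- arXiv:1803.09873 — 6 statements merged into one kernel-verified Lean document; each statement's English description precedes it below -/
import Mathlib

section
/- With the setup of the nonuniform Alikhanov formula (0 < α < 1, θ = α/2, t* = t_{n-θ}, t_k < t* and b^{(n)}_{n-k} defined by the integral formula b = ∫_{t_{k-1}}^{t_k} (t_k - s)(s - t_{k-1}) ϖ''(s) ds / (τ_k(τ_k + τ_{k+1})) and a^{(n)}_{n-k} = (1/τ_k) ∫_{t_{k-1}}^{t_k} ϖ'(s) ds, where ϖ'(s) = (t*-s)^{-α}/Γ(1-α), ϖ''(s) = α(t*-s)^{-1-α}/Γ(1-α)), it holds that b^{(n)}_{n-k} < (θ τ_k / (2(t* - t_k))) · (ρ_k/(1+ρ_k)) · a^{(n)}_{n-k} for 1 ≤ k ≤ n-1, where ρ_k = τ_k/τ_{k+1}. -/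
open intervalIntegral Real

theorem stmt_8 (α θ tkm1 tk tkp1 tstar : ℝ) (hα0 : 0 < α) (hα1 : α < 1)
    (hθ : θ = α / 2) (h1 : tkm1 < tk) (h2 : tk < tkp1) (h3 : tk < tstar) :
    (∫ s in tkm1..tk,
        (tk - s) * (s - tkm1) * (α * (tstar - s) ^ (-α - 1) / Real.Gamma (1 - α)))
        / ((tk - tkm1) * ((tk - tkm1) + (tkp1 - tk)))
      < (θ * (tk - tkm1) / (2 * (tstar - tk))) *
          (((tk - tkm1) / (tkp1 - tk)) / (1 + (tk - tkm1) / (tkp1 - tk))) *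
          ((1 / (tk - tkm1)) * ∫ s in tkm1..tk, (tstar - s) ^ (-α) / Real.Gamma (1 - α)) := by
  have hτ : 0 < tk - tkm1 := by linarith
  have hτ' : 0 < tkp1 - tk := by linarith
  have hts : 0 < tstar - tk := by linarith
  have hΓ : 0 < Real.Gamma (1 - α) := Real.Gamma_pos_of_pos (by linarith)
  have hpos : ∀ x ∈ Set.Icc tkm1 tk, 0 < tstar - x := fun x hx => by
    have := hx.2; linarith
  have hc1 : ContinuousOn (fun s => (tstar - s) ^ (-α - 1)) (Set.Icc tkm1 tk) :=
    ContinuousOn.rpow_const (continuous_const.sub continuous_id).continuousOn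
      (fun x hx => Or.inl (hpos x hx).ne')
  have hc0 : ContinuousOn (fun s => (tstar - s) ^ (-α)) (Set.Icc tkm1 tk) :=
    ContinuousOn.rpow_const (continuous_const.sub continuous_id).continuousOn
      (fun x hx => Or.inl (hpos x hx).ne')
  set B := ∫ s in tkm1..tk, (tstar - s) ^ (-α - 1) with hB
  set A := ∫ s in tkm1..tk, (tstar - s) ^ (-α) with hA
  -- Step 1: bound the quadratic-weight integral
  have hcf : ContinuousOn
      (fun s => (tk - s) * (s - tkm1) * (α * (tstar - s) ^ (-α - 1) / Real.Gamma (1 - α)))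
      (Set.Icc tkm1 tk) := by
    exact (((continuousOn_const.sub continuousOn_id).mul
      (continuousOn_id.sub continuousOn_const)).mul
      ((continuousOn_const.mul hc1).div_const _))
  have hcg : ContinuousOn
      (fun s => ((tk - tkm1) ^ 2 / 4) * (α * (tstar - s) ^ (-α - 1) / Real.Gamma (1 - α)))
      (Set.Icc tkm1 tk) := continuousOn_const.mul ((continuousOn_const.mul hc1).div_const _)
  have hstep1 :
      (∫ s in tkm1..tk,
        (tk - s) * (s - tkm1) * (α * (tstar - s) ^ (-α - 1) / Real.Gamma (1 - α)))
      ≤ ∫ s in tkm1..tk,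
        ((tk - tkm1) ^ 2 / 4) * (α * (tstar - s) ^ (-α - 1) / Real.Gamma (1 - α)) := by
    apply intervalIntegral.integral_mono_on h1.le
      (hcf.intervalIntegrable_of_Icc h1.le) (hcg.intervalIntegrable_of_Icc h1.le)
    intro x hx
    have hx1 := hx.1
    have hx2 := hx.2
    have hb : 0 < tstar - x := hpos x hx
    have h0 : (0:ℝ) ≤ α * (tstar - x) ^ (-α - 1) / Real.Gamma (1 - α) := by positivity
    have hq : (tk - x) * (x - tkm1) ≤ (tk - tkm1) ^ 2 / 4 := by nlinarith [sq_nonneg ((tk - x) - (x - tkm1))]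
    exact mul_le_mul_of_nonneg_right hq h0
  have hstep1' :
      (∫ s in tkm1..tk,
        ((tk - tkm1) ^ 2 / 4) * (α * (tstar - s) ^ (-α - 1) / Real.Gamma (1 - α)))
      = ((tk - tkm1) ^ 2 * α / (4 * Real.Gamma (1 - α))) * B := by
    have he : ∀ s : ℝ, ((tk - tkm1) ^ 2 / 4) * (α * (tstar - s) ^ (-α - 1) / Real.Gamma (1 - α))
        = ((tk - tkm1) ^ 2 * α / (4 * Real.Gamma (1 - α))) * (tstar - s) ^ (-α - 1) :=
      fun s => by ring
    simp_rw [he]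
    rw [intervalIntegral.integral_const_mul]
  -- Step 2: strict inequality (tstar - tk) * B < A
  have hstep2 : (tstar - tk) * B < A := by
    have := intervalIntegral.integral_lt_integral_of_continuousOn_of_le_of_exists_lt
      (f := fun s => (tstar - tk) * (tstar - s) ^ (-α - 1))
      (g := fun s => (tstar - s) ^ (-α)) h1
      (continuousOn_const.mul hc1) hc0 ?_ ?_
    · rwa [intervalIntegral.integral_const_mul] at this
    · intro x hx
      have hb : 0 < tstar - x := hpos x ⟨hx.1.le, hx.2⟩
      have hrw : (tstar - x) ^ (-α) = (tstar - x) * (tstar - x) ^ (-α - 1) := by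
        rw [show -α = 1 + (-α - 1) by ring, Real.rpow_add hb, Real.rpow_one]
        ring_nf
      show (tstar - tk) * (tstar - x) ^ (-α - 1) ≤ (tstar - x) ^ (-α)
      rw [hrw]
      have : 0 < (tstar - x) ^ (-α - 1) := Real.rpow_pos_of_pos hb _
      have hle : tstar - tk ≤ tstar - x := by linarith [hx.2]
      nlinarith
    · refine ⟨tkm1, Set.left_mem_Icc.mpr h1.le, ?_⟩
      have hb : 0 < tstar - tkm1 := by linarith
      have hrw : (tstar - tkm1) ^ (-α) = (tstar - tkm1) * (tstar - tkm1) ^ (-α - 1) := by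
        rw [show -α = 1 + (-α - 1) by ring, Real.rpow_add hb, Real.rpow_one]
        ring_nf
      show (tstar - tk) * (tstar - tkm1) ^ (-α - 1) < (tstar - tkm1) ^ (-α)
      rw [hrw]
      have : 0 < (tstar - tkm1) ^ (-α - 1) := Real.rpow_pos_of_pos hb _
      nlinarith
  -- rewrite RHS integral
  have hrhsI : (∫ s in tkm1..tk, (tstar - s) ^ (-α) / Real.Gamma (1 - α))
      = A / Real.Gamma (1 - α) := intervalIntegral.integral_div _ _
  rw [hrhsI, hθ]
  have key : (∫ s in tkm1..tk,
        (tk - s) * (s - tkm1) * (α * (tstar - s) ^ (-α - 1) / Real.Gamma (1 - α)))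
      < α * (tk - tkm1) ^ 2 * A / (4 * (tstar - tk) * Real.Gamma (1 - α)) := by
    have hd : (0:ℝ) < (tk - tkm1) ^ 2 * α / (4 * Real.Gamma (1 - α) * (tstar - tk)) := by
      positivity
    have h2' := mul_lt_mul_of_pos_left hstep2 hd
    calc (∫ s in tkm1..tk,
        (tk - s) * (s - tkm1) * (α * (tstar - s) ^ (-α - 1) / Real.Gamma (1 - α)))
        ≤ ((tk - tkm1) ^ 2 * α / (4 * Real.Gamma (1 - α))) * B := by rw [← hstep1']; exact hstep1
      _ = (tk - tkm1) ^ 2 * α / (4 * Real.Gamma (1 - α) * (tstar - tk)) * ((tstar - tk) * B) := by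
          field_simp
      _ < (tk - tkm1) ^ 2 * α / (4 * Real.Gamma (1 - α) * (tstar - tk)) * A := h2'
      _ = α * (tk - tkm1) ^ 2 * A / (4 * (tstar - tk) * Real.Gamma (1 - α)) := by ring
  calc (∫ s in tkm1..tk,
        (tk - s) * (s - tkm1) * (α * (tstar - s) ^ (-α - 1) / Real.Gamma (1 - α)))
        / ((tk - tkm1) * ((tk - tkm1) + (tkp1 - tk)))
      < (α * (tk - tkm1) ^ 2 * A / (4 * (tstar - tk) * Real.Gamma (1 - α)))
        / ((tk - tkm1) * ((tk - tkm1) + (tkp1 - tk))) := by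
        gcongr
    _ = (α / 2 * (tk - tkm1) / (2 * (tstar - tk))) *
          (((tk - tkm1) / (tkp1 - tk)) / (1 + (tk - tkm1) / (tkp1 - tk))) *
          ((1 / (tk - tkm1)) * (A / Real.Gamma (1 - α))) := by
        have hsum : (0:ℝ) < 1 + (tk - tkm1) / (tkp1 - tk) := by positivity
        field_simp
        ring
end

section
/- Let f : [t_{k-1}, t_{k+1}] → ℝ be continuous, positive and increasing, with t_{k-1} < t_k < t_{k+1}, τ_k = t_k - t_{k-1}, τ_{k+1} = t_{k+1} - t_k, ρ_k = τ_k/τ_{k+1}. Define I_j = ∫_{t_{j-1}}^{t_j} ((t_j - t)/τ_j) f(t) dt for j = k, k+1. Then I_{k+1} ≥ (1/ρ_k) I_k. -/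
open intervalIntegral

theorem stmt_10 (tkm1 tk tkp1 : ℝ) (h1 : tkm1 < tk) (h2 : tk < tkp1) (f : ℝ → ℝ)
    (hcont : ContinuousOn f (Set.Icc tkm1 tkp1))
    (hpos : ∀ t ∈ Set.Icc tkm1 tkp1, 0 < f t)
    (hmono : MonotoneOn f (Set.Icc tkm1 tkp1)) :
    (∫ t in tk..tkp1, ((tkp1 - t) / (tkp1 - tk)) * f t)
      ≥ (1 / ((tk - tkm1) / (tkp1 - tk))) *
          ∫ t in tkm1..tk, ((tk - t) / (tk - tkm1)) * f t := by
  have hτk : (0:ℝ) < tk - tkm1 := by linarith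
  have hτk1 : (0:ℝ) < tkp1 - tk := by linarith
  have hA := intervalIntegral.integral_comp_mul_add
      (a := (0:ℝ)) (b := 1) (fun t => ((tk - t) / (tk - tkm1)) * f t) (ne_of_gt hτk) tkm1
  have hB := intervalIntegral.integral_comp_mul_add
      (a := (0:ℝ)) (b := 1) (fun t => ((tkp1 - t) / (tkp1 - tk)) * f t) (ne_of_gt hτk1) tk
  simp only [mul_zero, zero_add, mul_one, smul_eq_mul] at hA hB
  have hA' : (∫ t in tkm1..tk, ((tk - t) / (tk - tkm1)) * f t)
      = (tk - tkm1) * ∫ z in (0:ℝ)..1,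
          ((tk - ((tk - tkm1) * z + tkm1)) / (tk - tkm1)) * f ((tk - tkm1) * z + tkm1) := by
    rw [hA]
    have : tk - tkm1 + tkm1 = tk := by ring
    rw [this]
    field_simp
  have hB' : (∫ t in tk..tkp1, ((tkp1 - t) / (tkp1 - tk)) * f t)
      = (tkp1 - tk) * ∫ z in (0:ℝ)..1,
          ((tkp1 - ((tkp1 - tk) * z + tk)) / (tkp1 - tk)) * f ((tkp1 - tk) * z + tk) := by
    rw [hB]
    have : tkp1 - tk + tk = tkp1 := by ring
    rw [this]
    field_simp
  rw [hA', hB']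
  have key : (∫ z in (0:ℝ)..1,
        ((tk - ((tk - tkm1) * z + tkm1)) / (tk - tkm1)) * f ((tk - tkm1) * z + tkm1))
      ≤ ∫ z in (0:ℝ)..1,
        ((tkp1 - ((tkp1 - tk) * z + tk)) / (tkp1 - tk)) * f ((tkp1 - tk) * z + tk) := by
    apply intervalIntegral.integral_mono_on (by norm_num)
    · apply ContinuousOn.intervalIntegrable
      apply ContinuousOn.mul
      · fun_prop
      · apply hcont.comp (by fun_prop)
        intro z hz
        rw [Set.uIcc_of_le (by norm_num), Set.mem_Icc] at hz
        obtain ⟨hz0, hz1⟩ := hz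
        simp only [Set.mem_Icc]
        constructor <;> nlinarith
    · apply ContinuousOn.intervalIntegrable
      apply ContinuousOn.mul
      · fun_prop
      · apply hcont.comp (by fun_prop)
        intro z hz
        rw [Set.uIcc_of_le (by norm_num), Set.mem_Icc] at hz
        obtain ⟨hz0, hz1⟩ := hz
        simp only [Set.mem_Icc]
        constructor <;> nlinarith
    · intro z hz
      obtain ⟨hz0, hz1⟩ := hz
      have e1 : (tk - ((tk - tkm1) * z + tkm1)) / (tk - tkm1) = 1 - z := by
        field_simp; ring
      have e2 : (tkp1 - ((tkp1 - tk) * z + tk)) / (tkp1 - tk) = 1 - z := by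
        field_simp; ring
      rw [e1, e2]
      have hx0 : (tk - tkm1) * z + tkm1 ∈ Set.Icc tkm1 tkp1 := by
        constructor <;> nlinarith
      have hx1 : (tkp1 - tk) * z + tk ∈ Set.Icc tkm1 tkp1 := by
        constructor <;> nlinarith
      have hff : f ((tk - tkm1) * z + tkm1) ≤ f ((tkp1 - tk) * z + tk) :=
        hmono hx0 hx1 (by nlinarith)
      have hfp := (hpos _ hx0).le
      nlinarith
  rw [ge_iff_le, one_div, inv_div]
  set A := ∫ z in (0:ℝ)..1,
      ((tk - ((tk - tkm1) * z + tkm1)) / (tk - tkm1)) * f ((tk - tkm1) * z + tkm1)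
  have hc : ((tkp1 - tk) / (tk - tkm1)) * ((tk - tkm1) * A) = (tkp1 - tk) * A := by
    field_simp
  rw [hc]
  exact mul_le_mul_of_nonneg_left key hτk1.le
end

section
/- Let f : [t_{k-1}, t_{k+1}] → ℝ be continuous, positive and increasing, with t_{k-1} < t_k < t_{k+1}, τ_k = t_k - t_{k-1}, τ_{k+1} = t_{k+1} - t_k, ρ_k = τ_k/τ_{k+1}. Define J_j = ∫_{t_{j-1}}^{t_j} ((t - t_{j-1})/τ_j) f(t) dt for j = k, k+1. Then J_{k+1} ≥ (1/ρ_k) J_k. -/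
/-! Substituting `t = t_{j-1} + z τ_j` turns `J_j` into `τ_j ∫₀¹ z f(t_{j-1} + z τ_j) dz`. For
`z ∈ [0, 1]` we have `t_{k-1} + z τ_k ≤ t_k ≤ t_k + z τ_{k+1}`, so monotonicity of `f` compares the
two rescaled integrands pointwise, and the factor `τ_{k+1} / τ_k = 1 / ρ_k` is what remains. -/

open intervalIntegral Set

theorem integral_ramp_mul_eq (f : ℝ → ℝ) (a b : ℝ) :
    ∫ t in a..b, (t - a) / (b - a) * f t = (b - a) * ∫ z in (0 : ℝ)..1, z * f ((b - a) * z + a) := by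
  rcases eq_or_ne b a with rfl | hba
  · simp
  have hab : b - a ≠ 0 := sub_ne_zero.mpr hba
  have hrescale := smul_integral_comp_mul_add (a := 0) (b := 1)
    (fun t => (t - a) / (b - a) * f t) (b - a) a
  simp only [mul_zero, zero_add, mul_one, sub_add_cancel, add_sub_cancel_right, smul_eq_mul,
    mul_div_cancel_left₀ _ hab] at hrescale
  exact hrescale.symm

theorem intervalIntegrable_mul_comp_affine {f : ℝ → ℝ} {a b : ℝ} (hab : a ≤ b)
    (hf : MonotoneOn f (Icc a b)) :
    IntervalIntegrable (fun z => z * f ((b - a) * z + a)) MeasureTheory.volume 0 1 := by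
  have hmaps : MapsTo (fun z => (b - a) * z + a) (Icc 0 1) (Icc a b) := fun z hz =>
    ⟨by nlinarith [hz.1], by nlinarith [hz.2]⟩
  have haffine : MonotoneOn (fun z => (b - a) * z + a) (Icc 0 1) := fun x _ y _ hxy => by
    nlinarith
  have hcomp : MonotoneOn (fun z => f ((b - a) * z + a)) (uIcc 0 1) := by
    rw [uIcc_of_le zero_le_one]
    exact hf.comp haffine hmaps
  exact hcomp.intervalIntegrable.continuousOn_mul continuousOn_id

theorem integral_mul_comp_affine_le {f : ℝ → ℝ} {a b c : ℝ} (hab : a ≤ b) (hbc : b ≤ c)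
    (hf : MonotoneOn f (Icc a c)) :
    ∫ z in (0 : ℝ)..1, z * f ((b - a) * z + a) ≤ ∫ z in (0 : ℝ)..1, z * f ((c - b) * z + b) := by
  refine integral_mono_on zero_le_one
    (intervalIntegrable_mul_comp_affine hab (hf.mono (Icc_subset_Icc_right hbc)))
    (intervalIntegrable_mul_comp_affine hbc (hf.mono (Icc_subset_Icc_left hab))) fun z hz => ?_
  have hleft : (b - a) * z + a ∈ Icc a c := ⟨by nlinarith [hz.1], by nlinarith [hz.2]⟩
  have hright : (c - b) * z + b ∈ Icc a c := ⟨by nlinarith [hz.1], by nlinarith [hz.2]⟩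
  exact mul_le_mul_of_nonneg_left (hf hleft hright (by nlinarith [hz.1, hz.2])) hz.1

theorem stmt_11_general (tkm1 tk tkp1 : ℝ) (h1 : tkm1 < tk) (h2 : tk < tkp1) (f : ℝ → ℝ)
    (hmono : MonotoneOn f (Set.Icc tkm1 tkp1)) :
    (∫ t in tk..tkp1, ((t - tk) / (tkp1 - tk)) * f t)
      ≥ (1 / ((tk - tkm1) / (tkp1 - tk))) *
          ∫ t in tkm1..tk, ((t - tkm1) / (tk - tkm1)) * f t := by
  have hτk : tk - tkm1 ≠ 0 := (sub_pos.mpr h1).ne'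
  rw [integral_ramp_mul_eq, integral_ramp_mul_eq, ge_iff_le, one_div_div, ← mul_assoc,
    div_mul_cancel₀ _ hτk]
  exact mul_le_mul_of_nonneg_left (integral_mul_comp_affine_le h1.le h2.le hmono) (sub_pos.mpr h2).le

theorem stmt_11 (tkm1 tk tkp1 : ℝ) (h1 : tkm1 < tk) (h2 : tk < tkp1) (f : ℝ → ℝ)
    (hcont : ContinuousOn f (Set.Icc tkm1 tkp1))
    (hpos : ∀ t ∈ Set.Icc tkm1 tkp1, 0 < f t)
    (hmono : MonotoneOn f (Set.Icc tkm1 tkp1)) :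
    (∫ t in tk..tkp1, ((t - tk) / (tkp1 - tk)) * f t)
      ≥ (1 / ((tk - tkm1) / (tkp1 - tk))) *
          ∫ t in tkm1..tk, ((t - tkm1) / (tk - tkm1)) * f t :=
  stmt_11_general tkm1 tk tkp1 h1 h2 f hmono
end

section
/- Let v ∈ C³([t_{k-1}, t_{k+1}]) and q ∈ C²([t_{k-1}, t_k]), with Π₂v the quadratic interpolant of v at t_{k-1}, t_k, t_{k+1} and Π₁q the linear interpolant of q at t_{k-1}, t_k; write Ẽ₂v = v - Π₂v, Ẽ₁q = q - Π₁q, τ_k = t_k - t_{k-1}, τ_{k+1} = t_{k+1} - t_k. Then ∫_{t_{k-1}}^{t_k} q'(t)(Ẽ₂v)'(t) dt = [∫_{t_k}^{t_{k+1}} (t_{k+1}-s)² v'''(s) ds] · ∫_{t_{k-1}}^{t_k} (Ẽ₁q)(t) dt / ((τ_{k+1}+τ_k)τ_{k+1}) − [∫_{t_{k-1}}^{t_k} (s-t_{k-1})² v'''(s) ds] · ∫_{t_{k-1}}^{t_k} (Ẽ₁q)(t) dt / ((τ_{k+1}+τ_k)τ_k) + ∫_{t_{k-1}}^{t_k} v'''(s)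 [∫_{t_{k-1}}^{s} (Ẽ₁q)(t) dt] ds. -/
/-!
Let `e = v' - (Π₂v)'`. Since `v - Π₂v` vanishes at `a` and `b`, `e` has zero mean on `[a, b]`,
so `q'` may be replaced by `(Ẽ₁q)' = q' - (q b - q a) / (b - a)`. One integration by parts
(`Ẽ₁q` vanishes at both ends) turns the integral into `-∫ Ẽ₁q e'`, and a second one against the
primitive of `Ẽ₁q` into `∫ v''' (∫ Ẽ₁q) - e'(b) ∫ₐᵇ Ẽ₁q`. Finally `e'(b) = v''(b) - 2 [a, b, c]v`,
and Taylor's formula with integral remainder at `b`, towards `a` and towards `c`, expresses this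
through the two weighted integrals of `v'''`.
-/

open intervalIntegral

open Set
open MeasureTheory (volume)
open scoped Interval

noncomputable def linInterp (a b : ℝ) (q : ℝ → ℝ) (t : ℝ) : ℝ :=
  q a + (q b - q a) * (t - a) / (b - a)

noncomputable def quadInterp (a b c : ℝ) (v : ℝ → ℝ) (t : ℝ) : ℝ :=
  v a * ((t - b) * (t - c) / ((a - b) * (a - c)))
    + v b * ((t - a) * (t - c) / ((b - a) * (b - c)))
    + v c * ((t - a) * (t - b) / ((c - a) * (c - b)))

section Interpolants

variable {a b c : ℝ}

theorem linInterp_left (q : ℝ → ℝ) : linInterp a b q a = q a := by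
  simp [linInterp]

theorem linInterp_right (hab : a ≠ b) (q : ℝ → ℝ) : linInterp a b q b = q b := by
  have : b - a ≠ 0 := sub_ne_zero.mpr hab.symm
  simp only [linInterp]
  field_simp
  ring

theorem hasDerivAt_linInterp (q : ℝ → ℝ) (t : ℝ) :
    HasDerivAt (linInterp a b q) ((q b - q a) / (b - a)) t := by
  refine ((((hasDerivAt_id t).sub_const a).const_mul (q b - q a)).div_const (b - a)).const_add
    (q a) |>.congr_deriv ?_
  ring

theorem quadInterp_left (hab : a ≠ b) (hac : a ≠ c) (v : ℝ → ℝ) : quadInterp a b c v a = v a := by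
  have : (a - b) * (a - c) ≠ 0 := mul_ne_zero (sub_ne_zero.mpr hab) (sub_ne_zero.mpr hac)
  simp [quadInterp, this]

theorem quadInterp_mid (hab : a ≠ b) (hbc : b ≠ c) (v : ℝ → ℝ) : quadInterp a b c v b = v b := by
  have : (b - a) * (b - c) ≠ 0 := mul_ne_zero (sub_ne_zero.mpr hab.symm) (sub_ne_zero.mpr hbc)
  simp [quadInterp, this]

theorem hasDerivAt_sub_mul_sub_div (p r d t : ℝ) :
    HasDerivAt (fun t => (t - p) * (t - r) / d) ((2 * t - p - r) / d) t := by
  refine ((((hasDerivAt_id' t).sub_const p).fun_mul ((hasDerivAt_id' t).sub_const r)).div_const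
    d).congr_deriv ?_
  ring

theorem hasDerivAt_two_mul_sub_sub_div (p r d t : ℝ) :
    HasDerivAt (fun t => (2 * t - p - r) / d) (2 / d) t := by
  simpa using (((((hasDerivAt_id t).const_mul 2).sub_const p).sub_const r).div_const d)

theorem hasDerivAt_quadInterp (v : ℝ → ℝ) (t : ℝ) :
    HasDerivAt (quadInterp a b c v)
      (v a * ((2 * t - b - c) / ((a - b) * (a - c)))
        + v b * ((2 * t - a - c) / ((b - a) * (b - c)))
        + v c * ((2 * t - a - b) / ((c - a) * (c - b)))) t :=
  (((hasDerivAt_sub_mul_sub_div b c _ t).const_mul (v a)).add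
    ((hasDerivAt_sub_mul_sub_div a c _ t).const_mul (v b))).add
    ((hasDerivAt_sub_mul_sub_div a b _ t).const_mul (v c))

theorem hasDerivAt_deriv_quadInterp (v : ℝ → ℝ) (t : ℝ) :
    HasDerivAt (deriv (quadInterp a b c v))
      (v a * (2 / ((a - b) * (a - c))) + v b * (2 / ((b - a) * (b - c)))
        + v c * (2 / ((c - a) * (c - b)))) t := by
  rw [show deriv (quadInterp a b c v) = _ from funext fun t => (hasDerivAt_quadInterp v t).deriv]
  exact (((hasDerivAt_two_mul_sub_sub_div b c _ t).const_mul (v a)).add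
    ((hasDerivAt_two_mul_sub_sub_div a c _ t).const_mul (v b))).add
    ((hasDerivAt_two_mul_sub_sub_div a b _ t).const_mul (v c))

end Interpolants

section IntegralIdentities

variable {a b : ℝ}

theorem integral_sub_sq_mul_third_deriv (x₀ : ℝ) {v v₁ v₂ v₃ : ℝ → ℝ}
    (hv₁ : ∀ t ∈ [[a, b]], HasDerivAt v (v₁ t) t) (hv₂ : ∀ t ∈ [[a, b]], HasDerivAt v₁ (v₂ t) t)
    (hv₃ : ∀ t ∈ [[a, b]], HasDerivAt v₂ (v₃ t) t) (hv₃i : IntervalIntegrable v₃ volume a b) :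
    ∫ s in a..b, (s - x₀) ^ 2 * v₃ s
      = ((b - x₀) ^ 2 * v₂ b - 2 * (b - x₀) * v₁ b + 2 * v b)
        - ((a - x₀) ^ 2 * v₂ a - 2 * (a - x₀) * v₁ a + 2 * v a) := by
  refine integral_eq_sub_of_hasDerivAt
    (f := fun s => (s - x₀) ^ 2 * v₂ s - 2 * (s - x₀) * v₁ s + 2 * v s) (fun t ht => ?_)
    (hv₃i.continuousOn_mul (g := fun s => (s - x₀) ^ 2) (by fun_prop))
  have hp : HasDerivAt (fun s => s - x₀) 1 t := (hasDerivAt_id' t).sub_const x₀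
  refine ((((hp.fun_pow 2).fun_mul (hv₃ t ht)).fun_sub
    ((hp.const_mul 2).fun_mul (hv₂ t ht))).fun_add ((hv₁ t ht).const_mul 2)).congr_deriv ?_
  push_cast
  ring

theorem integral_mul_eq_sub_integral_deriv_mul_primitive {g w w' : ℝ → ℝ}
    (hg : ContinuousOn g [[a, b]]) (hw : ∀ x ∈ [[a, b]], HasDerivAt w (w' x) x)
    (hw' : IntervalIntegrable w' volume a b) :
    ∫ x in a..b, w x * g x = w b * (∫ x in a..b, g x) - ∫ x in a..b, w' x * ∫ t in a..x, g t := by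
  have hG : ∀ x ∈ Ioo (min a b) (max a b), HasDerivAt (fun x => ∫ t in a..x, g t) (g x) x := by
    intro x hx
    have hg_Ioo := hg.mono Ioo_subset_Icc_self
    exact integral_hasDerivAt_right
      ((hg.mono (uIcc_subset_uIcc left_mem_uIcc (Ioo_subset_Icc_self hx))).intervalIntegrable)
      (hg_Ioo.stronglyMeasurableAtFilter isOpen_Ioo x hx)
      (hg_Ioo.continuousAt (isOpen_Ioo.mem_nhds hx))
  simpa using integral_mul_deriv_eq_deriv_mul_of_hasDerivAt
    (fun x hx => (hw x hx).continuousAt.continuousWithinAt)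
    (continuousOn_primitive_interval (hg.integrableOn_compact isCompact_uIcc))
    (fun x hx => hw x (Ioo_subset_Icc_self hx)) hG hw' hg.intervalIntegrable

theorem integral_deriv_mul_eq_neg_integral_mul_sub_linInterp (hab : a ≠ b) {q q' e e' : ℝ → ℝ}
    (hq : ∀ x ∈ [[a, b]], HasDerivAt q (q' x) x) (hq' : ContinuousOn q' [[a, b]])
    (he : ∀ x ∈ [[a, b]], HasDerivAt e (e' x) x)
    (he' : IntervalIntegrable e' volume a b) (he_mean : ∫ x in a..b, e x = 0) :
    ∫ x in a..b, q' x * e x = -∫ x in a..b, e' x * (q x - linInterp a b q x) := by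
  set m := (q b - q a) / (b - a)
  have he_cont : ContinuousOn e [[a, b]] := fun x hx => (he x hx).continuousAt.continuousWithinAt
  have hshift : ∫ x in a..b, q' x * e x = ∫ x in a..b, (q' x - m) * e x := by
    simp only [sub_mul]
    rw [integral_sub (f := fun x => q' x * e x) (hq'.mul he_cont).intervalIntegrable
      (he_cont.intervalIntegrable.const_mul m), integral_const_mul, he_mean, mul_zero, sub_zero]
  have hibp := integral_mul_deriv_eq_deriv_mul (u := fun x => q x - linInterp a b q x)
    (u' := fun x => q' x - m)
    (fun x hx => (hq x hx).sub (hasDerivAt_linInterp q x)) he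
    (hq'.sub continuousOn_const).intervalIntegrable he'
  simp only [linInterp_left, linInterp_right hab, sub_self, zero_mul, zero_sub] at hibp
  simp_rw [hshift, mul_comm (e' _), hibp, neg_neg]

end IntegralIdentities

theorem integral_sub_deriv_quadInterp_eq_zero {a b c : ℝ} (hab : a ≠ b) (hac : a ≠ c)
    (hbc : b ≠ c) {v v₁ : ℝ → ℝ} (hv : ∀ t ∈ [[a, b]], HasDerivAt v (v₁ t) t)
    (hv₁ : IntervalIntegrable v₁ volume a b) :
    ∫ t in a..b, (v₁ t - deriv (quadInterp a b c v) t) = 0 := by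
  rw [integral_eq_sub_of_hasDerivAt (f := fun t => v t - quadInterp a b c v t)
    (fun t ht => (hv t ht).sub (hasDerivAt_quadInterp v t).differentiableAt.hasDerivAt)
    (hv₁.sub (ContinuousOn.intervalIntegrable fun t _ =>
      (hasDerivAt_deriv_quadInterp v t).continuousAt.continuousWithinAt))]
  rw [quadInterp_left hab hac, quadInterp_mid hab hbc, sub_self, sub_self, sub_self]

theorem stmt_16_general (a b c : ℝ) (hab : a < b) (hbc : b < c)
    (v v1 v2 v3 : ℝ → ℝ)
    (hv1 : ∀ t ∈ Set.Icc a c, HasDerivAt v (v1 t) t)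
    (hv2 : ∀ t ∈ Set.Icc a c, HasDerivAt v1 (v2 t) t)
    (hv3 : ∀ t ∈ Set.Icc a c, HasDerivAt v2 (v3 t) t)
    (hv3cont : ContinuousOn v3 (Set.Icc a c))
    (q q' q'' : ℝ → ℝ)
    (hq' : ∀ t ∈ Set.Icc a b, HasDerivAt q (q' t) t)
    (hq'' : ∀ t ∈ Set.Icc a b, HasDerivAt q' (q'' t) t)
    (P2 E1q : ℝ → ℝ)
    (hP2 : ∀ t, P2 t = v a * ((t - b) * (t - c) / ((a - b) * (a - c)))
        + v b * ((t - a) * (t - c) / ((b - a) * (b - c)))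
        + v c * ((t - a) * (t - b) / ((c - a) * (c - b))))
    (hE1q : ∀ t, E1q t = q t - (q a + (q b - q a) * (t - a) / (b - a))) :
    ∫ t in a..b, q' t * (v1 t - deriv P2 t)
      = (∫ s in b..c, (c - s) ^ 2 * v3 s) * (∫ t in a..b, E1q t)
            / (((c - b) + (b - a)) * (c - b))
        - (∫ s in a..b, (s - a) ^ 2 * v3 s) * (∫ t in a..b, E1q t)
            / (((c - b) + (b - a)) * (b - a))
        + ∫ s in a..b, v3 s * (∫ t in a..s, E1q t) := by
  have hac := hab.trans hbc
  obtain rfl : P2 = quadInterp a b c v := funext hP2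
  replace hE1q : ∀ t, E1q t = q t - linInterp a b q t := hE1q
  rw [← uIcc_of_le hab.le] at hq' hq''
  have hab_ac : [[a, b]] ⊆ Icc a c := by
    rw [uIcc_of_le hab.le]; exact Icc_subset_Icc_right hbc.le
  have hbc_ac : [[b, c]] ⊆ Icc a c := by
    rw [uIcc_of_le hbc.le]; exact Icc_subset_Icc_left hab.le
  set C := v a * (2 / ((a - b) * (a - c))) + v b * (2 / ((b - a) * (b - c)))
    + v c * (2 / ((c - a) * (c - b))) with hC
  have he_mean := integral_sub_deriv_quadInterp_eq_zero hab.ne hac.ne hbc.ne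
    (fun t ht => hv1 t (hab_ac ht)) (ContinuousOn.intervalIntegrable fun t ht =>
      (hv2 t (hab_ac ht)).continuousAt.continuousWithinAt)
  have hE1q_cont : ContinuousOn E1q [[a, b]] := fun t ht => by
    rw [funext hE1q]
    exact ((hq' t ht).continuousAt.sub (hasDerivAt_linInterp q t).continuousAt).continuousWithinAt
  rw [integral_deriv_mul_eq_neg_integral_mul_sub_linInterp hab.ne hq'
    (fun t ht => (hq'' t ht).continuousAt.continuousWithinAt)
    (fun t ht => (hv2 t (hab_ac ht)).fun_sub (hasDerivAt_deriv_quadInterp v t))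
    (ContinuousOn.intervalIntegrable fun t ht =>
      ((hv3 t (hab_ac ht)).sub_const C).continuousAt.continuousWithinAt) he_mean]
  simp only [← hE1q]
  rw [integral_mul_eq_sub_integral_deriv_mul_primitive hE1q_cont
    (fun t ht => (hv3 t (hab_ac ht)).sub_const C) (hv3cont.mono hab_ac).intervalIntegrable]
  have taylor {x y : ℝ} (h : [[x, y]] ⊆ Icc a c) (x₀ : ℝ) :=
    integral_sub_sq_mul_third_deriv x₀ (fun t ht => hv1 t (h ht)) (fun t ht => hv2 t (h ht))
      (fun t ht => hv3 t (h ht)) (hv3cont.mono h).intervalIntegrable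
  simp_rw [sub_sq_comm c]
  rw [taylor hbc_ac c, taylor hab_ac a, show c - b + (b - a) = c - a by ring, hC]
  field_simp [sub_ne_zero.mpr hab.ne, sub_ne_zero.mpr hbc.ne, sub_ne_zero.mpr hac.ne,
    sub_ne_zero.mpr hab.ne', sub_ne_zero.mpr hbc.ne', sub_ne_zero.mpr hac.ne']
  ring

theorem stmt_16 (a b c : ℝ) (hab : a < b) (hbc : b < c)
    (v v1 v2 v3 : ℝ → ℝ)
    (hv1 : ∀ t ∈ Set.Icc a c, HasDerivAt v (v1 t) t)
    (hv2 : ∀ t ∈ Set.Icc a c, HasDerivAt v1 (v2 t) t)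
    (hv3 : ∀ t ∈ Set.Icc a c, HasDerivAt v2 (v3 t) t)
    (hv3cont : ContinuousOn v3 (Set.Icc a c))
    (q q' q'' : ℝ → ℝ)
    (hq' : ∀ t ∈ Set.Icc a b, HasDerivAt q (q' t) t)
    (hq'' : ∀ t ∈ Set.Icc a b, HasDerivAt q' (q'' t) t)
    (hq''cont : ContinuousOn q'' (Set.Icc a b))
    (P2 E1q : ℝ → ℝ)
    (hP2 : ∀ t, P2 t = v a * ((t - b) * (t - c) / ((a - b) * (a - c)))
        + v b * ((t - a) * (t - c) / ((b - a) * (b - c)))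
        + v c * ((t - a) * (t - b) / ((c - a) * (c - b))))
    (hE1q : ∀ t, E1q t = q t - (q a + (q b - q a) * (t - a) / (b - a))) :
    ∫ t in a..b, q' t * (v1 t - deriv P2 t)
      = (∫ s in b..c, (c - s) ^ 2 * v3 s) * (∫ t in a..b, E1q t)
            / (((c - b) + (b - a)) * (c - b))
        - (∫ s in a..b, (s - a) ^ 2 * v3 s) * (∫ t in a..b, E1q t)
            / (((c - b) + (b - a)) * (b - a))
        + ∫ s in a..b, v3 s * (∫ t in a..s, E1q t) :=
  stmt_16_general a b c hab hbc v v1 v2 v3 hv1 hv2 hv3 hv3cont q q' q'' hq' hq'' P2 E1q hP2 hE1q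
end

section
/- Let discrete kernels A^{(n)}_{n-k} > 0 (1 ≤ k ≤ n ≤ N) satisfy the monotonicity A^{(n)}_{k-2} ≥ A^{(n)}_{k-1} for 2 ≤ k ≤ n, and define complementary kernels by P^{(n)}_0 = 1/A^{(n)}_0 and P^{(n)}_{n-j} = (1/A^{(j)}_0) Σ_{k=j+1}^{n} (A^{(k)}_{k-j-1} - A^{(k)}_{k-j}) P^{(n)}_{n-k} for 1 ≤ j ≤ n-1. Then all P^{(n)}_{n-j} ≥ 0 and Σ_{j=k}^{n} P^{(n)}_{n-j} A^{(j)}_{j-k} = 1 for every 1 ≤ k ≤ n ≤ N. -/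
open Finset

theorem stmt_17 (N : ℕ) (A P : ℕ → ℕ → ℝ)
    (hApos : ∀ n j, 1 ≤ n → n ≤ N → j ≤ n - 1 → 0 < A n j)
    (hAmono : ∀ n j, 1 ≤ n → n ≤ N → j + 1 ≤ n - 1 → A n j ≥ A n (j + 1))
    (hP0 : ∀ n, 1 ≤ n → n ≤ N → P n 0 = 1 / A n 0)
    (hPrec : ∀ n j, 1 ≤ j → j ≤ n - 1 → n ≤ N →
      P n (n - j) = (1 / A j 0) *
        ∑ k ∈ Finset.Icc (j + 1) n, (A k (k - j - 1) - A k (k - j)) * P n (n - k)) :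
    (∀ n j, 1 ≤ n → n ≤ N → j ≤ n - 1 → 0 ≤ P n j)
    ∧ ∀ k n, 1 ≤ k → k ≤ n → n ≤ N →
        ∑ j ∈ Finset.Icc k n, P n (n - j) * A j (j - k) = 1 := by
  have hPnn : ∀ n, 1 ≤ n → n ≤ N → ∀ d, d ≤ n - 1 → 0 ≤ P n d := by
    intro n hn1 hnN d
    induction d using Nat.strong_induction_on with
    | _ d ih =>
      intro hd
      rcases Nat.eq_zero_or_pos d with h0 | hpos
      · subst h0
        rw [hP0 n hn1 hnN]
        have := hApos n 0 hn1 hnN (Nat.zero_le _)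
        positivity
      · have hj1 : 1 ≤ n - d := by omega
        have hjn : n - d ≤ n - 1 := by omega
        have hnd : n - (n - d) = d := by omega
        have hrec := hPrec n (n - d) hj1 hjn hnN
        rw [hnd] at hrec
        rw [hrec]
        have hA0 := hApos (n - d) 0 hj1 (by omega) (Nat.zero_le _)
        apply mul_nonneg (le_of_lt (by positivity))
        apply Finset.sum_nonneg
        intro m hm
        simp only [Finset.mem_Icc] at hm
        apply mul_nonneg
        · have h1 := hAmono m (m - (n - d) - 1) (by omega) (by omega) (by omega)
          have h2 : m - (n - d) - 1 + 1 = m - (n - d) := by omega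
          rw [h2] at h1
          linarith
        · exact ih (n - m) (by omega) (by omega)
  refine ⟨fun n j hn1 hnN hj => hPnn n hn1 hnN j hj, ?_⟩
  have hsum : ∀ n, 1 ≤ n → n ≤ N → ∀ d k, 1 ≤ k → k ≤ n → n - k = d →
      ∑ j ∈ Finset.Icc k n, P n (n - j) * A j (j - k) = 1 := by
    intro n hn1 hnN d
    induction d using Nat.strong_induction_on with
    | _ d ih =>
      intro k hk1 hkn hdk
      have hAk0 : A k 0 ≠ 0 := ne_of_gt (hApos k 0 hk1 (le_trans hkn hnN) (Nat.zero_le _))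
      rcases eq_or_lt_of_le hkn with heq | hlt
      · subst heq
        rw [Finset.Icc_self, Finset.sum_singleton, Nat.sub_self, hP0 k hk1 hnN]
        field_simp
      · rw [Finset.Icc_eq_cons_Ioc hkn, Finset.sum_cons, Nat.sub_self,
          hPrec n k hk1 (by omega) hnN, ← Finset.Icc_add_one_left_eq_Ioc]
        have hcomb : (1 / A k 0 *
              ∑ m ∈ Finset.Icc (k + 1) n, (A m (m - k - 1) - A m (m - k)) * P n (n - m)) * A k 0
            = ∑ m ∈ Finset.Icc (k + 1) n, (A m (m - k - 1) - A m (m - k)) * P n (n - m) := by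
          field_simp
        rw [hcomb, ← Finset.sum_add_distrib]
        have : ∀ m ∈ Finset.Icc (k + 1) n,
            (A m (m - k - 1) - A m (m - k)) * P n (n - m) + P n (n - m) * A m (m - k)
              = P n (n - m) * A m (m - (k + 1)) := by
          intro m hm
          have : m - k - 1 = m - (k + 1) := by omega
          rw [← this]; ring
        rw [Finset.sum_congr rfl this]
        exact ih (n - (k + 1)) (by omega) (k + 1) (by omega) (by omega) rfl
  exact fun k n hk1 hkn hnN => hsum n (le_trans hk1 hkn) hnN (n - k) k hk1 hkn rfl
end

section
/- Suppose nonnegative sequences Υ^k (1 ≤ k ≤ n), positive monotone kernels A^{(n)}_{n-k} (with A^{(n)}_{k-2} ≥ A^{(n)}_{k-1} > 0) and nonnegative numbers G_loc^k, G_his^k satisfy the ECS bound Υ^n ≤ A^{(n)}_0 G_loc^n + Σ_{k=1}^{n-1} (A^{(n)}_{n-k-1} - A^{(n)}_{n-k}) G_his^k for every n ≤ N. Let P^{(n)}_{n-j} be the complementary kernels determined by Σ_{j=k}^{n} P^{(n)}_{n-j} A^{(j)}_{j-k} = 1. Then the global consistency error E^n = Σ_{k=1}^{n} P^{(n)}_{n-k}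 Υ^k satisfies E^n ≤ Σ_{k=1}^{n} P^{(n)}_{n-k} A^{(k)}_0 G_loc^k + Σ_{k=1}^{n-1} P^{(n)}_{n-k} A^{(k)}_0 G_his^k. -/
open Finset

/-!
Write `p j` for the complementary kernel `P^{(n)}_{n-j}` of a fixed level `n`. Subtracting the
orthogonality identities `∑_{j=k}^n p j A^{(j)}_{j-k} = 1` at `k` and `k + 1` gives the recursion
`p k A^{(k)}_0 = ∑_{j=k+1}^n p j (A^{(j)}_{j-k-1} - A^{(j)}_{j-k})`, which by monotonicity of the
kernels shows `p ≥ 0` by downward induction on `k`. Multiplying the ECS bound by `p k ≥ 0`, summing,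
and exchanging the order of summation in the history part, the same recursion collapses the double
sum to `∑_j p j A^{(j)}_0 G_his^j`.
-/

theorem sum_Icc_Icc_sub_one_comm {M : Type*} [AddCommMonoid M] (n : ℕ) (f : ℕ → ℕ → M) :
    ∑ k ∈ Icc 1 n, ∑ j ∈ Icc 1 (k - 1), f k j =
      ∑ j ∈ Icc 1 (n - 1), ∑ k ∈ Icc (j + 1) n, f k j :=
  sum_comm' fun k j ↦ by simp only [mem_Icc]; omega

section ComplementaryKernel

variable {A : ℕ → ℕ → ℝ} {p : ℕ → ℝ} {n : ℕ}

theorem complementary_mul_kernel_zero_eq {k : ℕ} (hkn : k ≤ n)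
    (hk : ∑ j ∈ Icc k n, p j * A j (j - k) = 1)
    (hk₁ : ∑ j ∈ Icc (k + 1) n, p j * A j (j - (k + 1)) = 1) :
    p k * A k 0 = ∑ j ∈ Icc (k + 1) n, p j * (A j (j - k - 1) - A j (j - k)) := by
  rw [← insert_Icc_add_one_left_eq_Icc hkn, sum_insert (by simp), Nat.sub_self] at hk
  simp only [Nat.sub_sub] at hk₁ ⊢
  simp only [mul_sub, sum_sub_distrib, hk₁]
  linarith

variable (hid : ∀ k, 1 ≤ k → k ≤ n → ∑ j ∈ Icc k n, p j * A j (j - k) = 1)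
include hid

theorem complementary_nonneg (hApos : ∀ j, 1 ≤ j → j ≤ n → 0 < A j 0)
    (hAmono : ∀ j i, 1 ≤ j → j ≤ n → i + 1 ≤ j - 1 → A j (i + 1) ≤ A j i) :
    ∀ k, 1 ≤ k → k ≤ n → 0 ≤ p k := by
  suffices ∀ d k, n - k = d → 1 ≤ k → k ≤ n → 0 ≤ p k from fun k ↦ this _ k rfl
  intro d
  induction d using Nat.strong_induction_on with
  | _ d ih =>
    intro k hd hk hkn
    refine nonneg_of_mul_nonneg_left ?_ (hApos k hk hkn)
    rcases hkn.eq_or_lt with rfl | hlt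
    · have hself := hid k hk le_rfl
      rw [Icc_self, sum_singleton, Nat.sub_self] at hself
      rw [hself]; exact zero_le_one
    rw [complementary_mul_kernel_zero_eq hkn (hid k hk hkn) (hid (k + 1) (by omega) hlt)]
    refine sum_nonneg fun j hj ↦ ?_
    rw [mem_Icc] at hj
    have hdiff : A j (j - k) ≤ A j (j - k - 1) := by
      have := hAmono j (j - k - 1) (by omega) hj.2 (by omega)
      rwa [Nat.sub_add_cancel (by omega)] at this
    exact mul_nonneg (ih (n - j) (by omega) j rfl (by omega) hj.2) (sub_nonneg.mpr hdiff)

/-- The summation exchange (1.11). -/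
theorem sum_complementary_mul_history (G : ℕ → ℝ) :
    ∑ k ∈ Icc 1 n, p k * ∑ j ∈ Icc 1 (k - 1), (A k (k - j - 1) - A k (k - j)) * G j =
      ∑ j ∈ Icc 1 (n - 1), p j * A j 0 * G j := by
  simp only [mul_sum]
  rw [sum_Icc_Icc_sub_one_comm]
  refine sum_congr rfl fun j hj ↦ ?_
  rw [mem_Icc] at hj
  rw [complementary_mul_kernel_zero_eq (by omega) (hid j hj.1 (by omega))
    (hid (j + 1) (by omega) (by omega)), sum_mul]
  exact sum_congr rfl fun k _ ↦ by ring

end ComplementaryKernel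

theorem stmt_18_general (N : ℕ) (A P : ℕ → ℕ → ℝ) (Υ Gloc Ghis : ℕ → ℝ)
    (hApos : ∀ n j, 1 ≤ n → n ≤ N → j ≤ n - 1 → 0 < A n j)
    (hAmono : ∀ n j, 1 ≤ n → n ≤ N → j + 1 ≤ n - 1 → A n j ≥ A n (j + 1))
    (hECS : ∀ n, 1 ≤ n → n ≤ N →
      Υ n ≤ A n 0 * Gloc n
        + ∑ k ∈ Finset.Icc 1 (n - 1), (A n (n - k - 1) - A n (n - k)) * Ghis k)
    (hPid : ∀ k n, 1 ≤ k → k ≤ n → n ≤ N →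
      ∑ j ∈ Finset.Icc k n, P n (n - j) * A j (j - k) = 1) :
    ∀ n, 1 ≤ n → n ≤ N →
      ∑ k ∈ Finset.Icc 1 n, P n (n - k) * Υ k
        ≤ ∑ k ∈ Finset.Icc 1 n, P n (n - k) * A k 0 * Gloc k
          + ∑ k ∈ Finset.Icc 1 (n - 1), P n (n - k) * A k 0 * Ghis k := by
  intro n _ hnN
  have hid : ∀ k, 1 ≤ k → k ≤ n → ∑ j ∈ Icc k n, P n (n - j) * A j (j - k) = 1 :=
    fun k hk hkn ↦ hPid k n hk hkn hnN
  have hP : ∀ k, 1 ≤ k → k ≤ n → 0 ≤ P n (n - k) :=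
    complementary_nonneg (p := fun j ↦ P n (n - j)) hid
      (fun j hj hjn ↦ hApos j 0 hj (hjn.trans hnN) (Nat.zero_le _))
      (fun j i hj hjn hi ↦ hAmono j i hj (hjn.trans hnN) hi)
  calc ∑ k ∈ Icc 1 n, P n (n - k) * Υ k
      ≤ ∑ k ∈ Icc 1 n, P n (n - k) * (A k 0 * Gloc k
          + ∑ j ∈ Icc 1 (k - 1), (A k (k - j - 1) - A k (k - j)) * Ghis j) := by
        refine sum_le_sum fun k hk ↦ ?_
        rw [mem_Icc] at hk
        exact mul_le_mul_of_nonneg_left (hECS k hk.1 (hk.2.trans hnN)) (hP k hk.1 hk.2)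
    _ = _ := by
        simp only [mul_add, sum_add_distrib, mul_assoc,
          sum_complementary_mul_history (p := fun j ↦ P n (n - j)) hid Ghis]

theorem stmt_18 (N : ℕ) (A P : ℕ → ℕ → ℝ) (Υ Gloc Ghis : ℕ → ℝ)
    (hApos : ∀ n j, 1 ≤ n → n ≤ N → j ≤ n - 1 → 0 < A n j)
    (hAmono : ∀ n j, 1 ≤ n → n ≤ N → j + 1 ≤ n - 1 → A n j ≥ A n (j + 1))
    (hΥ : ∀ k, 1 ≤ k → k ≤ N → 0 ≤ Υ k)
    (hGloc : ∀ k, 1 ≤ k → k ≤ N → 0 ≤ Gloc k)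
    (hGhis : ∀ k, 1 ≤ k → k ≤ N → 0 ≤ Ghis k)
    (hECS : ∀ n, 1 ≤ n → n ≤ N →
      Υ n ≤ A n 0 * Gloc n
        + ∑ k ∈ Finset.Icc 1 (n - 1), (A n (n - k - 1) - A n (n - k)) * Ghis k)
    (hPid : ∀ k n, 1 ≤ k → k ≤ n → n ≤ N →
      ∑ j ∈ Finset.Icc k n, P n (n - j) * A j (j - k) = 1) :
    ∀ n, 1 ≤ n → n ≤ N →
      ∑ k ∈ Finset.Icc 1 n, P n (n - k) * Υ k
        ≤ ∑ k ∈ Finset.Icc 1 n, P n (n - k) * A k 0 * Gloc k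
          + ∑ k ∈ Finset.Icc 1 (n - 1), P n (n - k) * A k 0 * Ghis k :=
  stmt_18_general N A P Υ Gloc Ghis hApos hAmono hECS hPid
end
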